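/- Suppose f : 𝔻 → ℂ is continuously differentiable and there exists ε > 0 with f#(z) > ε for all z ∈ 𝔻, where f#(z) = (|f_z(z)|+|f_{z̄}(z)|)/(1+|f(z)|²). Let ρ_n > 0 with ρ_n → 0, (z_n) ⊂ 𝔻, ξ₀ ∈ ℂ such that z_n + ρ_nξ₀ ∈ 𝔻 and |F_n(ξ₀)| = ρ_n²|f(z_n + ρ_nξ₀)| ≥ c > 0 for all n. Then the rescaled spherical derivatives F_n#(ξ₀) := ρ_n³(|f_z(z_n+ρ_nξ₀)|+|f_{z̄}(z_n+ρ_nξ₀)|)/(1 + ρ_n⁴|f(z_n+ρ_nξ₀)|²) tend to ∞ as n → ∞. -/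

import Mathlib

open Complex Metric Filter Topology

/-- Wirtinger derivative ∂/∂z of a real-differentiable function. -/
noncomputable def wderiv (f : ℂ → ℂ) (z : ℂ) : ℂ :=
  (fderiv ℝ f z 1 - Complex.I * fderiv ℝ f z Complex.I) / 2

/-- Wirtinger derivative ∂/∂z̄ of a real-differentiable function. -/
noncomputable def wderivBar (f : ℂ → ℂ) (z : ℂ) : ℂ :=
  (fderiv ℝ f z 1 + Complex.I * fderiv ℝ f z Complex.I) / 2

/-- Spherical derivative f#(z) = (|f_z| + |f_z̄|)/(1+|f|²). -/
noncomputable def sphDeriv (f : ℂ → ℂ) (z : ℂ) : ℝ :=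
  (‖wderiv f z‖ + ‖wderivBar f z‖) / (1 + (‖f z‖) ^ 2)

/-- Chordal distance on ℂ. -/
noncomputable def chordal (z w : ℂ) : ℝ :=
  ‖z - w‖ / (Real.sqrt (1 + (‖z‖) ^ 2) * Real.sqrt (1 + (‖w‖) ^ 2))

/-! The paper's estimate `F_n#(ξ₀) ≥ (f#(w_n)/ρ_n) · |F_n(ξ₀)|²/(1+|F_n(ξ₀)|²)` with
`w_n = z_n + ρ_nξ₀` and `|F_n(ξ₀)| = ρ_n²|f(w_n)| ≥ c`: the first factor exceeds `ε/ρ_n → ∞` and,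
since `t ↦ t/(1+t)` is increasing, the second is at least `c²/(1+c²) > 0`. -/

theorem div_one_add_le_div_one_add {𝕜 : Type*} [Field 𝕜] [LinearOrder 𝕜] [IsStrictOrderedRing 𝕜]
    {x y : 𝕜} (hx : 0 ≤ x) (hxy : x ≤ y) : x / (1 + x) ≤ y / (1 + y) := by
  rw [div_le_div_iff₀ (by positivity) (by linarith)]
  linarith

theorem sphDeriv_div_mul_le_rescaled (f : ℂ → ℂ) (w : ℂ) {ρ : ℝ} (hρ : 0 < ρ) :
    sphDeriv f w / ρ * ((ρ ^ 2 * ‖f w‖) ^ 2 / (1 + (ρ ^ 2 * ‖f w‖) ^ 2))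
      ≤ ρ ^ 3 * (‖wderiv f w‖ + ‖wderivBar f w‖) / (1 + ρ ^ 4 * ‖f w‖ ^ 2) := by
  set A := ‖wderiv f w‖ + ‖wderivBar f w‖
  set B := ‖f w‖
  calc A / (1 + B ^ 2) / ρ * ((ρ ^ 2 * B) ^ 2 / (1 + (ρ ^ 2 * B) ^ 2))
      = ρ ^ 3 * A / (1 + ρ ^ 4 * B ^ 2) * (B ^ 2 / (1 + B ^ 2)) := by
        field_simp
    _ ≤ ρ ^ 3 * A / (1 + ρ ^ 4 * B ^ 2) := by
        refine mul_le_of_le_one_right (by positivity) ?_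
        rw [div_le_one (by positivity)]
        linarith

theorem rescaled_sphDeriv_tendsto_atTop_general (f : ℂ → ℂ)
    (ε : ℝ) (hε : 0 < ε)
    (hsph : ∀ z ∈ ball (0 : ℂ) 1, ε < sphDeriv f z)
    (z : ℕ → ℂ)
    (ρ : ℕ → ℝ) (hρ : ∀ n, 0 < ρ n) (hρlim : Tendsto ρ atTop (nhds 0))
    (ξ₀ : ℂ) (hin : ∀ n, z n + (ρ n : ℂ) * ξ₀ ∈ ball (0 : ℂ) 1)
    (c : ℝ) (hc : 0 < c)
    (hcbd : ∀ n, c ≤ (ρ n) ^ 2 * ‖f (z n + (ρ n : ℂ) * ξ₀)‖) :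
    Tendsto (fun n => (ρ n) ^ 3
        * (‖wderiv f (z n + (ρ n : ℂ) * ξ₀)‖
            + ‖wderivBar f (z n + (ρ n : ℂ) * ξ₀)‖)
        / (1 + (ρ n) ^ 4 * (‖f (z n + (ρ n : ℂ) * ξ₀)‖) ^ 2))
      atTop atTop := by
  have hρ_pos : Tendsto ρ atTop (𝓝[>] 0) :=
    tendsto_nhdsWithin_iff.2 ⟨hρlim, Eventually.of_forall hρ⟩
  have hlow : Tendsto (fun n => ε / ρ n * (c ^ 2 / (1 + c ^ 2))) atTop atTop := by
    simpa only [div_eq_mul_inv, Pi.inv_apply] using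
      ((hρ_pos.inv_tendsto_nhdsGT_zero.const_mul_atTop hε).atTop_mul_const (by positivity))
  refine tendsto_atTop_mono (fun n => ?_) hlow
  set w := z n + (ρ n : ℂ) * ξ₀
  have hsph_w : ε ≤ sphDeriv f w := (hsph w (hin n)).le
  calc ε / ρ n * (c ^ 2 / (1 + c ^ 2))
      ≤ sphDeriv f w / ρ n * ((ρ n ^ 2 * ‖f w‖) ^ 2 / (1 + (ρ n ^ 2 * ‖f w‖) ^ 2)) :=
        mul_le_mul (div_le_div_of_nonneg_right hsph_w (hρ n).le)
          (div_one_add_le_div_one_add (by positivity) (pow_le_pow_left₀ hc.le (hcbd n) 2))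
          (by positivity) (div_nonneg (hε.le.trans hsph_w) (hρ n).le)
    _ ≤ _ := sphDeriv_div_mul_le_rescaled f w (hρ n)

/-- If f# > ε on 𝔻 and ρ_n²|f(z_n+ρ_nξ₀)| ≥ c > 0, then the rescaled spherical
derivatives F_n#(ξ₀) tend to infinity. -/
theorem rescaled_sphDeriv_tendsto_atTop (f : ℂ → ℂ)
    (hf : ContDiffOn ℝ 1 f (ball (0 : ℂ) 1))
    (ε : ℝ) (hε : 0 < ε)
    (hsph : ∀ z ∈ ball (0 : ℂ) 1, ε < sphDeriv f z)
    (z : ℕ → ℂ) (hz : ∀ n, z n ∈ ball (0 : ℂ) 1)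
    (ρ : ℕ → ℝ) (hρ : ∀ n, 0 < ρ n) (hρlim : Tendsto ρ atTop (nhds 0))
    (ξ₀ : ℂ) (hin : ∀ n, z n + (ρ n : ℂ) * ξ₀ ∈ ball (0 : ℂ) 1)
    (c : ℝ) (hc : 0 < c)
    (hcbd : ∀ n, c ≤ (ρ n) ^ 2 * ‖f (z n + (ρ n : ℂ) * ξ₀)‖) :
    Tendsto (fun n => (ρ n) ^ 3
        * (‖wderiv f (z n + (ρ n : ℂ) * ξ₀)‖
            + ‖wderivBar f (z n + (ρ n : ℂ) * ξ₀)‖)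
        / (1 + (ρ n) ^ 4 * (‖f (z n + (ρ n : ℂ) * ξ₀)‖) ^ 2))
      atTop atTop :=
  rescaled_sphDeriv_tendsto_atTop_general f ε hε hsph z ρ hρ hρlim ξ₀ hin c hc hcbd
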